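/- Let S be a set of vertices of a prime graph G. Then either the t-convex hull of S equals the t-interval of S, which in turn equals the P3-interval of S, or the t-convex hull of S equals V(G). -/

import Mathlib

open Set

variable {V : Type*}

/-- `p` is a triangle path: a path with no edge joining vertices at index
distance greater than 2 along the path. -/
def TPath (G : SimpleGraph V) {u v : V} (p : G.Walk u v) : Prop :=
  p.IsPath ∧ ∀ i j : ℕ, i + 2 < j →
    ∀ (hi : i < p.support.length) (hj : j < p.support.length),
      ¬ G.Adj (p.support.get ⟨i, hi⟩) (p.support.get ⟨j, hj⟩)

/-- `p` is a monophonic (induced) path: a path with no edge joining vertices at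
index distance greater than 1 along the path. -/
def MPath (G : SimpleGraph V) {u v : V} (p : G.Walk u v) : Prop :=
  p.IsPath ∧ ∀ i j : ℕ, i + 1 < j →
    ∀ (hi : i < p.support.length) (hj : j < p.support.length),
      ¬ G.Adj (p.support.get ⟨i, hi⟩) (p.support.get ⟨j, hj⟩)

/-- `p` is a geodesic (shortest path). -/
def GPath (G : SimpleGraph V) {u v : V} (p : G.Walk u v) : Prop :=
  p.IsPath ∧ ∀ q : G.Walk u v, p.length ≤ q.length

/-- `S` is convex in the triangle path convexity. -/
def TConvex (G : SimpleGraph V) (S : Set V) : Prop :=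
  ∀ ⦃u v : V⦄, u ∈ S → v ∈ S → ∀ p : G.Walk u v, TPath G p → ∀ w ∈ p.support, w ∈ S

/-- `S` is convex in the monophonic convexity. -/
def MConvex (G : SimpleGraph V) (S : Set V) : Prop :=
  ∀ ⦃u v : V⦄, u ∈ S → v ∈ S → ∀ p : G.Walk u v, MPath G p → ∀ w ∈ p.support, w ∈ S

/-- `S` is convex in the geodetic convexity. -/
def GConvex (G : SimpleGraph V) (S : Set V) : Prop :=
  ∀ ⦃u v : V⦄, u ∈ S → v ∈ S → ∀ p : G.Walk u v, GPath G p → ∀ w ∈ p.support, w ∈ S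

/-- `S` is `P₃`-convex: no vertex outside `S` has two neighbours in `S`. -/
def P3Convex (G : SimpleGraph V) (S : Set V) : Prop :=
  ∀ w ∉ S, ∀ a ∈ S, ∀ b ∈ S, G.Adj w a → G.Adj w b → a = b

/-- The triangle path interval of `S`. -/
def TInterval (G : SimpleGraph V) (S : Set V) : Set V :=
  S ∪ {w | ∃ u ∈ S, ∃ v ∈ S, ∃ p : G.Walk u v, TPath G p ∧ w ∈ p.support}

/-- The monophonic interval of `S`. -/
def MInterval (G : SimpleGraph V) (S : Set V) : Set V :=
  S ∪ {w | ∃ u ∈ S, ∃ v ∈ S, ∃ p : G.Walk u v, MPath G p ∧ w ∈ p.support}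

/-- The geodetic interval of `S`. -/
def GInterval (G : SimpleGraph V) (S : Set V) : Set V :=
  S ∪ {w | ∃ u ∈ S, ∃ v ∈ S, ∃ p : G.Walk u v, GPath G p ∧ w ∈ p.support}

/-- The `P₃`-interval of `S`: `S` together with the vertices having at least two
neighbours in `S`. -/
def P3Interval (G : SimpleGraph V) (S : Set V) : Set V :=
  S ∪ {w | w ∉ S ∧ ∃ a ∈ S, ∃ b ∈ S, a ≠ b ∧ G.Adj w a ∧ G.Adj w b}

/-- The convex hull of `S` in the triangle path convexity. -/
def THull (G : SimpleGraph V) (S : Set V) : Set V :=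
  ⋂₀ {C : Set V | S ⊆ C ∧ TConvex G C}

/-- The convex hull of `S` in the monophonic convexity. -/
def MHull (G : SimpleGraph V) (S : Set V) : Set V :=
  ⋂₀ {C : Set V | S ⊆ C ∧ MConvex G C}

/-- The convex hull of `S` in the geodetic convexity. -/
def GHull (G : SimpleGraph V) (S : Set V) : Set V :=
  ⋂₀ {C : Set V | S ⊆ C ∧ GConvex G C}

/-- `K` separates the vertices `a` and `b`: both lie outside `K` and every walk
between them meets `K`. -/
def Separates (G : SimpleGraph V) (K : Set V) (a b : V) : Prop :=
  a ∉ K ∧ b ∉ K ∧ ∀ p : G.Walk a b, ∃ w ∈ p.support, w ∈ K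

/-- `K` is a separator of `G`. -/
def IsSeparator (G : SimpleGraph V) (K : Set V) : Prop :=
  ∃ a b : V, Separates G K a b

/-- `G` is prime: it has no clique separator. -/
def IsPrime (G : SimpleGraph V) : Prop :=
  ¬ ∃ C : Set V, G.IsClique C ∧ IsSeparator G C

/-- `K` is a minimal separator for `a` and `b`. -/
def IsMinSeparator (G : SimpleGraph V) (K : Set V) (a b : V) : Prop :=
  Separates G K a b ∧ ∀ K' : Set V, K' ⊂ K → ¬ Separates G K' a b

/-- `W` induces a maximal prime subgraph of `G`. -/
def IsMPSubgraph (G : SimpleGraph V) (W : Set V) : Prop :=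
  IsPrime (G.induce W) ∧ ∀ W' : Set V, W ⊆ W' → IsPrime (G.induce W') → W' = W

/-- `C` is the vertex set of a connected component of `G - S`. -/
def IsCompOf (G : SimpleGraph V) (S C : Set V) : Prop :=
  C.Nonempty ∧ C ∩ S = ∅ ∧
  (∀ x ∈ C, ∀ y ∈ C, ∃ p : G.Walk x y, ∀ w ∈ p.support, w ∈ C) ∧
  (∀ x ∈ C, ∀ y : V, y ∉ S → G.Adj x y → y ∈ C)

/-! A t-convex set `C ≠ V` of a prime graph is a clique: for a component `D` of `G - C`, the
vertices of `C` with a neighbour in `D` form a clique (a triangle path between two of them inside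
a walk through `D` must stay in `C`, so it has no interior vertex), and this clique separates `D`
from the rest of `C`. Hence, unless the hull of `S` is `V`, it is a clique. A triangle path between
adjacent vertices has at most one interior vertex, a common neighbour of its ends, so the
t-interval of `S` is its P3-interval. That set is a P3-convex clique, hence t-convex; it is
P3-convex because a vertex with two neighbours in it lies in the hull, so it is adjacent to any two
vertices of `S`. -/

open SimpleGraph

variable {G : SimpleGraph V}

lemma tPath_iff {u v : V} {p : G.Walk u v} : TPath G p ↔ p.IsPath ∧
    ∀ i j : ℕ, i + 2 < j → j ≤ p.length → ¬ G.Adj (p.getVert i) (p.getVert j) := by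
  refine and_congr_right fun _ => ⟨fun h i j hij hj => ?_, fun h i j hij hi hj => ?_⟩
  · have := h i j hij (by rw [Walk.length_support]; omega) (by rw [Walk.length_support]; omega)
    simpa only [List.get_eq_getElem, Walk.support_getElem_eq_getVert] using this
  · simp only [List.get_eq_getElem, Walk.support_getElem_eq_getVert]
    exact h i j hij (by rw [Walk.length_support] at hj; omega)

namespace SimpleGraph.Walk

variable {u v : V}

lemma exists_mem_support_ne_ne_of_not_adj (p : G.Walk u v) (huv : u ≠ v) (h : ¬ G.Adj u v) :
    ∃ w ∈ p.support, w ≠ u ∧ w ≠ v := by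
  cases p with
  | nil => exact absurd rfl huv
  | @cons _ w _ hw q =>
    refine ⟨w, by simp, hw.ne.symm, ?_⟩
    rintro rfl
    exact h hw

lemma exists_shorter_of_adj_getVert (p : G.Walk u v) {i j : ℕ} (hij : i + 1 < j)
    (hj : j ≤ p.length) (h : G.Adj (p.getVert i) (p.getVert j)) :
    ∃ q : G.Walk u v, q.length < p.length ∧ q.support ⊆ p.support := by
  refine ⟨(p.take i).append (cons h (p.drop j)), ?_, ?_⟩
  · simp only [length_append, length_cons, take_length, drop_length]
    omega
  · rw [support_append, support_cons, List.tail_cons]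
    exact List.append_subset.mpr
      ⟨(p.isSubwalk_take i).support_subset, (p.isSubwalk_drop j).support_subset⟩

-- Induction on length: a chord of `p.bypass` spanning more than two steps gives a shortcut.
lemma exists_tPath_support_subset (p : G.Walk u v) :
    ∃ q : G.Walk u v, TPath G q ∧ q.support ⊆ p.support := by
  classical
  induction hn : p.length using Nat.strong_induction_on generalizing p with
  | _ n ih =>
  by_cases hb : TPath G p.bypass
  · exact ⟨p.bypass, hb, p.support_bypass_subset_support⟩
  obtain ⟨i, j, hij, hj, hadj⟩ : ∃ i j : ℕ, i + 2 < j ∧ j ≤ p.bypass.length ∧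
      G.Adj (p.bypass.getVert i) (p.bypass.getVert j) := by
    simpa [tPath_iff, p.bypass_isPath] using hb
  obtain ⟨q, hqlen, hqsub⟩ := p.bypass.exists_shorter_of_adj_getVert (by omega) hj hadj
  obtain ⟨r, hr, hrsub⟩ := ih q.length (hn ▸ hqlen.trans_le p.length_bypass_le_length) q rfl
  exact ⟨r, hr, fun w hw => p.support_bypass_subset_support (hqsub (hrsub hw))⟩

end SimpleGraph.Walk

lemma tPath_cons_cons {a w b : V} (h₁ : G.Adj a w) (h₂ : G.Adj w b) (hab : a ≠ b) :
    TPath G (Walk.cons h₁ (Walk.cons h₂ Walk.nil)) := by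
  refine tPath_iff.mpr ⟨?_, fun i j hij hj => ?_⟩
  · simp [Walk.isPath_def, hab, h₁.ne, h₂.ne]
  · simp only [Walk.length_cons, Walk.length_nil] at hj
    omega

lemma TPath.mem_of_isClique {C : Set V} (hC : G.IsClique C) {u v w : V} {p : G.Walk u v}
    (hp : TPath G p) (hu : u ∈ C) (hv : v ∈ C) (hw : w ∈ p.support) :
    w ∈ C ∨ (u ≠ v ∧ G.Adj u w ∧ G.Adj w v) := by
  rcases p with _ | ⟨h₁, _ | ⟨h₂, _ | ⟨h₃, q⟩⟩⟩
  · simp_all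
  · simp at hw
    rcases hw with rfl | rfl <;> simp_all
  · have hp' := hp.1
    simp only [Walk.isPath_def, Walk.support_cons, Walk.support_nil, List.nodup_cons,
      List.mem_cons, List.not_mem_nil] at hp'
    simp only [Walk.support_cons, Walk.support_nil, List.mem_cons, List.not_mem_nil] at hw
    rcases hw with rfl | rfl | rfl | hw
    exacts [Or.inl hu, Or.inr ⟨by tauto, h₁, h₂⟩, Or.inl hv, hw.elim]
  · have huv : u ≠ v := by
      rintro rfl
      exact Walk.not_nil_cons (Walk.isPath_iff_nil.mp hp.1)
    refine absurd (hC hu hv huv) ?_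
    have := (tPath_iff.mp hp).2 0 _ (by simp) le_rfl
    rwa [Walk.getVert_zero, Walk.getVert_length] at this

section Components

variable {S D : Set V}

lemma exists_isCompOf {x : V} (hx : x ∉ S) : ∃ D, x ∈ D ∧ IsCompOf G S D := by
  classical
  set D := {y | ∃ p : G.Walk x y, ∀ w ∈ p.support, w ∉ S}
  have mem_of_mem_support {y w : V} (p : G.Walk x y) (hp : ∀ w ∈ p.support, w ∉ S)
      (hw : w ∈ p.support) : w ∈ D :=
    ⟨p.takeUntil w hw, fun z hz => hp z (p.support_takeUntil_subset_support hw hz)⟩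
  have not_mem {y : V} (hy : y ∈ D) : y ∉ S := hy.choose_spec y (Walk.end_mem_support _)
  refine ⟨D, ⟨.nil, by simpa using hx⟩, ⟨x, .nil, by simpa using hx⟩,
    Set.eq_empty_of_forall_notMem fun y hy => not_mem hy.1 hy.2, ?_, ?_⟩
  · rintro y ⟨p, hp⟩ z ⟨q, hq⟩
    refine ⟨p.reverse.append q, fun w hw => ?_⟩
    rcases (Walk.mem_support_append_iff _ _).mp hw with hw | hw
    · exact mem_of_mem_support p hp (by simpa using hw)
    · exact mem_of_mem_support q hq hw
  · rintro y ⟨p, hp⟩ z hz hyz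
    refine ⟨p.concat hyz, fun w hw => ?_⟩
    rw [Walk.support_concat, List.mem_append, List.mem_singleton] at hw
    rcases hw with hw | rfl
    exacts [hp w hw, hz]

lemma IsCompOf.exists_mem_support_adj (hD : IsCompOf G S D) {y z : V} (p : G.Walk y z)
    (hy : y ∈ D) (hz : z ∉ D) : ∃ w ∈ p.support, w ∈ S ∧ ∃ d ∈ D, G.Adj d w := by
  induction p with
  | nil => exact absurd hy hz
  | @cons y y' z h q ih =>
    by_cases hy' : y' ∈ D
    · obtain ⟨w, hw, hwS⟩ := ih hy' hz
      exact ⟨w, by simp [hw], hwS⟩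
    · have hy'S : y' ∈ S := by
        by_contra hy'S
        exact hy' (hD.2.2.2 y hy y' hy'S h)
      exact ⟨y', by simp, hy'S, y, hy, h⟩

lemma IsCompOf.isClique_of_tConvex (hS : TConvex G S) (hD : IsCompOf G S D) :
    G.IsClique {c | c ∈ S ∧ ∃ d ∈ D, G.Adj d c} := by
  rintro a ⟨haS, da, hda, ha⟩ b ⟨hbS, db, hdb, hb⟩ hab
  by_contra hnadj
  obtain ⟨r, hr⟩ := hD.2.2.1 da hda db hdb
  obtain ⟨q, hq, hqsub⟩ := (Walk.cons ha.symm (r.concat hb)).exists_tPath_support_subset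
  obtain ⟨w, hw, hwa, hwb⟩ := q.exists_mem_support_ne_ne_of_not_adj hab hnadj
  have hwD : w ∈ D := by
    have := hqsub hw
    simp only [Walk.support_cons, Walk.support_concat, List.mem_cons, List.mem_append,
      List.not_mem_nil, or_false] at this
    rcases this with rfl | hw | rfl
    exacts [absurd rfl hwa, hr w hw, absurd rfl hwb]
  exact (Set.eq_empty_iff_forall_notMem.mp hD.2.1) w ⟨hwD, hS haS hbS q hq w hw⟩

end Components

lemma TConvex.isClique_of_ne_univ (hprime : IsPrime G) {C : Set V} (hC : TConvex G C)
    (hne : C ≠ Set.univ) : G.IsClique C := by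
  obtain ⟨x, hx⟩ := (Set.ne_univ_iff_exists_notMem C).mp hne
  obtain ⟨D, hxD, hD⟩ := exists_isCompOf (G := G) hx
  have hK := hD.isClique_of_tConvex hC
  refine hK.subset fun c hc => ?_
  by_contra hcK
  refine hprime ⟨_, hK, x, c, fun h => hx h.1, hcK, fun p => ?_⟩
  refine hD.exists_mem_support_adj p hxD fun hcD => ?_
  exact (Set.eq_empty_iff_forall_notMem.mp hD.2.1) c ⟨hcD, hc⟩

section Intervals

variable {S C : Set V}

lemma subset_tHull : S ⊆ THull G S :=
  fun _ hx => Set.mem_sInter.mpr fun _ hC => hC.1 hx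

lemma tHull_subset (hSC : S ⊆ C) (hC : TConvex G C) : THull G S ⊆ C :=
  Set.sInter_subset_of_mem ⟨hSC, hC⟩

lemma tConvex_tHull : TConvex G (THull G S) := fun _ _ hu hv p hp w hw =>
  Set.mem_sInter.mpr fun C hC =>
    hC.2 (Set.mem_sInter.mp hu C hC) (Set.mem_sInter.mp hv C hC) p hp w hw

lemma tInterval_subset (hSC : S ⊆ C) (hC : TConvex G C) : TInterval G S ⊆ C := by
  rintro w (hw | ⟨u, hu, v, hv, p, hp, hw⟩)
  exacts [hSC hw, hC (hSC hu) (hSC hv) p hp w hw]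

lemma p3Interval_subset_tInterval : P3Interval G S ⊆ TInterval G S := by
  rintro w (hw | ⟨-, a, ha, b, hb, hab, hwa, hwb⟩)
  exacts [Or.inl hw, Or.inr ⟨a, ha, b, hb, _, tPath_cons_cons hwa.symm hwb hab, by simp⟩]

lemma tInterval_eq_p3Interval (hS : G.IsClique S) : TInterval G S = P3Interval G S := by
  refine subset_antisymm ?_ p3Interval_subset_tInterval
  rintro w (hw | ⟨u, hu, v, hv, p, hp, hw⟩)
  · exact Or.inl hw
  by_cases hwS : w ∈ S
  · exact Or.inl hwS
  obtain ⟨huv, hwu, hwv⟩ := (hp.mem_of_isClique hS hu hv hw).resolve_left hwS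
  exact Or.inr ⟨hwS, u, hu, v, hv, huv, hwu.symm, hwv⟩

lemma SimpleGraph.IsClique.tConvex_of_p3Convex (hC : G.IsClique C) (hP3 : P3Convex G C) :
    TConvex G C := by
  intro u v hu hv p hp w hw
  refine (hp.mem_of_isClique hC hu hv hw).elim id fun ⟨huv, hwu, hwv⟩ => ?_
  by_contra hwC
  exact huv (hP3 w hwC u hu v hv hwu.symm hwv)

lemma p3Convex_p3Interval (hSC : S ⊆ C) (hC : TConvex G C) (hCc : G.IsClique C) :
    P3Convex G (P3Interval G S) := by
  intro w hw a ha b hb hwa hwb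
  by_contra hab
  have hP3C : P3Interval G S ⊆ C := p3Interval_subset_tInterval.trans (tInterval_subset hSC hC)
  have hwC : w ∈ C := hC (hP3C ha) (hP3C hb) _ (tPath_cons_cons hwa.symm hwb hab) w (by simp)
  have hwS : w ∉ S := fun h => hw (Or.inl h)
  obtain ⟨s, hs, t, ht, hst⟩ : ∃ s ∈ S, ∃ t ∈ S, s ≠ t := by
    rcases ha with ha | ⟨-, s, hs, t, ht, hst, -⟩
    · rcases hb with hb | ⟨-, s, hs, t, ht, hst, -⟩
      exacts [⟨a, ha, b, hb, hab⟩, ⟨s, hs, t, ht, hst⟩]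
    · exact ⟨s, hs, t, ht, hst⟩
  refine hw (Or.inr ⟨hwS, s, hs, t, ht, hst, ?_, ?_⟩)
  · exact hCc hwC (hSC hs) (ne_of_mem_of_not_mem hs hwS).symm
  · exact hCc hwC (hSC ht) (ne_of_mem_of_not_mem ht hwS).symm

end Intervals

theorem stmt_10_general (G : SimpleGraph V)
    (hprime : IsPrime G) (S : Set V) :
    (THull G S = TInterval G S ∧ TInterval G S = P3Interval G S) ∨
    THull G S = Set.univ := by
  by_cases hU : THull G S = Set.univ
  · exact Or.inr hU
  have hH : G.IsClique (THull G S) := tConvex_tHull.isClique_of_ne_univ hprime hU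
  have hTH : TInterval G S ⊆ THull G S := tInterval_subset subset_tHull tConvex_tHull
  have hTP : TInterval G S = P3Interval G S := tInterval_eq_p3Interval (hH.subset subset_tHull)
  refine Or.inl ⟨subset_antisymm ?_ hTH, hTP⟩
  rw [hTP]
  refine tHull_subset Set.subset_union_left ?_
  exact (hH.subset (hTP ▸ hTH)).tConvex_of_p3Convex
    (p3Convex_p3Interval subset_tHull tConvex_tHull hH)

theorem stmt_10 [Fintype V] (G : SimpleGraph V) (hconn : G.Connected)
    (hprime : IsPrime G) (S : Set V) :
    (THull G S = TInterval G S ∧ TInterval G S = P3Interval G S) ∨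
    THull G S = Set.univ :=
  stmt_10_general G hprime S
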